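/- Conservativity of termination: if P' ⊇ P and no name defined by P'∖P occurs in P or in the term M, then M terminates under P iff M terminates under P'. -/

import Mathlib

/-- Terms of continuation calculus: names (coded as naturals) and dot. -/
inductive Tm where
  | name : ℕ → Tm
  | dot : Tm → Tm → Tm
deriving DecidableEq

/-- Right-hand sides of rules: names, variables (de Bruijn-style indices
into the left-hand side's variable list), and dot. -/
inductive Rhs where
  | name : ℕ → Rhs
  | var : ℕ → Rhs
  | dot : Rhs → Rhs → Rhs
deriving DecidableEq

/-- A rule `n.x₁.⋯.xₖ → r`: head name, arity `k`, and right-hand side. -/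
structure Rule where
  head : ℕ
  arity : ℕ
  rhs : Rhs
deriving DecidableEq

/-- A program is a finite set of rules. -/
abbrev Program := Finset Rule

/-- Variables occurring in a right-hand side. -/
def Rhs.HasVar : Rhs → ℕ → Prop
  | .name _, _ => False
  | .var w, v => w = v
  | .dot a b, v => a.HasVar v ∨ b.HasVar v

/-- Well-formedness: every variable of a right-hand side occurs in the
left-hand side, and there is at most one rule per head name. -/
def Program.Wf (P : Program) : Prop :=
  (∀ r ∈ P, ∀ v, r.rhs.HasVar v → v < r.arity) ∧
  (∀ r₁ ∈ P, ∀ r₂ ∈ P, r₁.head = r₂.head → r₁ = r₂)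

/-- `n.t₁.⋯.tₖ` : left-associated application of a term to a list of terms. -/
def Tm.apps : Tm → List Tm → Tm
  | h, [] => h
  | h, t :: ts => Tm.apps (h.dot t) ts

/-- Instantiation of a right-hand side with the terms matched by the
left-hand side variables; fails if some variable is out of range. -/
def Rhs.inst (ts : List Tm) : Rhs → Option Tm
  | .name n => some (.name n)
  | .var v => ts[v]?
  | .dot a b => do pure (.dot (← a.inst ts) (← b.inst ts))

/-- One-step evaluation `M →_P N`. -/
def Step (P : Program) (M N : Tm) : Prop :=
  ∃ r ∈ P, ∃ ts : List Tm, ts.length = r.arity ∧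
    M = Tm.apps (.name r.head) ts ∧ r.rhs.inst ts = some N

/-- Multi-step evaluation `M →*_P N`. -/
def Steps (P : Program) : Tm → Tm → Prop := Relation.ReflTransGen (Step P)

/-- `M` is final: it has no successor. -/
def Final (P : Program) (M : Tm) : Prop := ¬ ∃ N, Step P M N

/-- `M` terminates: it evaluates to a final term. -/
def Terminates (P : Program) (M : Tm) : Prop := ∃ N, Steps P M N ∧ Final P N

/-- The name `m` occurs in a term. -/
def Tm.HasName (m : ℕ) : Tm → Prop
  | .name n => n = m
  | .dot a b => a.HasName m ∨ b.HasName m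

/-- The name `m` occurs in a right-hand side. -/
def Rhs.HasName (m : ℕ) : Rhs → Prop
  | .name n => n = m
  | .var _ => False
  | .dot a b => a.HasName m ∨ b.HasName m

/-- The name `m` occurs (is mentioned) in a program. -/
def Program.HasName (P : Program) (m : ℕ) : Prop :=
  ∃ r ∈ P, r.head = m ∨ r.rhs.HasName m

/-- The name `m` is defined by the program (is the head of some rule). -/
def Program.Defines (P : Program) (m : ℕ) : Prop :=
  ∃ r ∈ P, r.head = m

/-- Substitution of a term for a name, `M[fr := t]`. -/
def Tm.subName (m : ℕ) (t : Tm) : Tm → Tm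
  | .name n => if n = m then t else .name n
  | .dot a b => .dot (Tm.subName m t a) (Tm.subName m t b)

/-- Common reduct relation `M =_P N`. -/
def CommonRed (P : Program) (M N : Tm) : Prop :=
  ∃ t, Steps P M t ∧ Steps P N t

/-- Observational equivalence `M ≈_P N`. -/
def ObsEq (P : Program) (M N : Tm) : Prop :=
  ∀ P' : Program, P'.Wf → P ⊆ P' →
    ∀ X : Tm, (Terminates P' (X.dot M) ↔ Terminates P' (X.dot N))

/-- Renaming of names in a term. -/
def Tm.rename (f : ℕ → ℕ) : Tm → Tm
  | .name n => .name (f n)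
  | .dot a b => .dot (a.rename f) (b.rename f)

/-- Renaming of names in a right-hand side. -/
def Rhs.rename (f : ℕ → ℕ) : Rhs → Rhs
  | .name n => .name (f n)
  | .var v => .var v
  | .dot a b => .dot (a.rename f) (b.rename f)

/-- Renaming of names in a rule. -/
def Rule.rename (f : ℕ → ℕ) (r : Rule) : Rule :=
  ⟨f r.head, r.arity, r.rhs.rename f⟩

/-- Renaming of names in a program. -/
def Program.rename (f : ℕ → ℕ) (P : Program) : Program :=
  P.image (Rule.rename f)

/-- The fresh substitution `[n⃗ := m⃗]` as a function on names. -/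
def renFun (ns ms : List ℕ) (n : ℕ) : ℕ :=
  ((ns.zip ms).lookup n).getD n

/-- `M` has arity `k` under `P`: `M = n.q₁.⋯.qᵢ` where `n` has a rule of
arity `i + k`. -/
def Tm.ArityIs (P : Program) (M : Tm) (k : ℕ) : Prop :=
  ∃ r ∈ P, ∃ ts : List Tm, M = Tm.apps (.name r.head) ts ∧ ts.length + k = r.arity

/-!
Rules of `P' \ P` fire only on terms headed by one of their own heads, so a term avoiding these
heads has the same one-step reducts under `P` and `P'`. The names of a reduct come from the redex
or from the rule used, and `P` does not mention the new heads, so avoidance is preserved along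
evaluation. Hence from `M` the evaluations under `P` and `P'` coincide step by step, and so do
their final terms.
-/

theorem Tm.hasName_apps (m : ℕ) (ts : List Tm) (h : Tm) :
    (h.apps ts).HasName m ↔ h.HasName m ∨ ∃ t ∈ ts, t.HasName m := by
  induction ts generalizing h with
  | nil => simp [Tm.apps]
  | cons a l ih =>
    simp only [Tm.apps, ih, Tm.HasName, List.mem_cons, exists_eq_or_imp]
    tauto

theorem Rhs.hasName_of_inst {m : ℕ} {ts : List Tm} {N : Tm} :
    ∀ {r : Rhs}, r.inst ts = some N → N.HasName m → r.HasName m ∨ ∃ t ∈ ts, t.HasName m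
  | .name n, hi, hN => by
    simp only [Rhs.inst, Option.some.injEq] at hi
    subst hi
    exact Or.inl hN
  | .var v, hi, hN => Or.inr ⟨N, List.mem_iff_getElem?.mpr ⟨v, hi⟩, hN⟩
  | .dot a b, hi, hN => by
    simp only [Rhs.inst, Option.pure_def, Option.bind_eq_bind, Option.bind_eq_some_iff,
      Option.some.injEq] at hi
    obtain ⟨A, hA, B, hB, rfl⟩ := hi
    rcases hN with hN | hN
    · exact (hasName_of_inst hA hN).imp_left Or.inl
    · exact (hasName_of_inst hB hN).imp_left Or.inr

theorem Step.hasName {P : Program} {X N : Tm} {m : ℕ} (hs : Step P X N) (hN : N.HasName m) :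
    X.HasName m ∨ P.HasName m := by
  obtain ⟨r, hr, ts, -, rfl, hi⟩ := hs
  rcases Rhs.hasName_of_inst hi hN with h | h
  · exact Or.inr ⟨r, hr, Or.inr h⟩
  · exact Or.inl ((Tm.hasName_apps m ts _).2 (Or.inr h))

theorem Step.mono {P P' : Program} (hsub : P ⊆ P') {X N : Tm} (hs : Step P X N) :
    Step P' X N := by
  obtain ⟨r, hr, h⟩ := hs
  exact ⟨r, hsub hr, h⟩

def Tm.AvoidsHeads (Q : Program) (X : Tm) : Prop :=
  ∀ r ∈ Q, ¬ X.HasName r.head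

section Extension

variable {P P' : Program} {X N : Tm}

theorem Step.of_avoidsHeads (hX : X.AvoidsHeads (P' \ P)) (hs : Step P' X N) : Step P X N := by
  obtain ⟨r, hr, ts, hlen, rfl, hi⟩ := hs
  by_cases hrP : r ∈ P
  · exact ⟨r, hrP, ts, hlen, rfl, hi⟩
  · exact absurd ((Tm.hasName_apps r.head ts (.name r.head)).2 (Or.inl rfl))
      (hX r (Finset.mem_sdiff.2 ⟨hr, hrP⟩))

theorem Tm.AvoidsHeads.of_step {Q : Program} (hP : ∀ r ∈ Q, ¬ P.HasName r.head)
    (hX : X.AvoidsHeads Q) (hs : Step P X N) : N.AvoidsHeads Q := fun r hr hN =>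
  (hs.hasName hN).elim (hX r hr) (hP r hr)

theorem Tm.AvoidsHeads.of_steps {Q : Program} (hP : ∀ r ∈ Q, ¬ P.HasName r.head)
    (hX : X.AvoidsHeads Q) (hs : Steps P X N) : N.AvoidsHeads Q := by
  induction hs with
  | refl => exact hX
  | tail _ hstep ih => exact ih.of_step hP hstep

theorem final_iff_of_avoidsHeads (hsub : P ⊆ P') (hX : X.AvoidsHeads (P' \ P)) :
    Final P X ↔ Final P' X :=
  not_congr ⟨fun ⟨N, hs⟩ => ⟨N, hs.mono hsub⟩, fun ⟨N, hs⟩ => ⟨N, hs.of_avoidsHeads hX⟩⟩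

theorem steps_iff_of_avoidsHeads (hsub : P ⊆ P') (hP : ∀ r ∈ P' \ P, ¬ P.HasName r.head)
    (hX : X.AvoidsHeads (P' \ P)) : Steps P X N ↔ Steps P' X N := by
  refine ⟨fun hs => Relation.ReflTransGen.mono (fun _ _ => Step.mono hsub) _ _ hs, fun hs => ?_⟩
  induction hs with
  | refl => exact .refl
  | tail _ hstep ih => exact ih.tail (hstep.of_avoidsHeads (hX.of_steps hP ih))

end Extension

theorem terminates_conservative_extension_general (P P' : Program)
    (hsub : P ⊆ P') (M : Tm)
    (hfresh : ∀ r ∈ P', r ∉ P → ¬ Tm.HasName r.head M ∧ ¬ P.HasName r.head) :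
    Terminates P M ↔ Terminates P' M := by
  have hM : M.AvoidsHeads (P' \ P) := fun r hr =>
    (hfresh r (Finset.mem_sdiff.1 hr).1 (Finset.mem_sdiff.1 hr).2).1
  have hPfresh : ∀ r ∈ P' \ P, ¬ P.HasName r.head := fun r hr =>
    (hfresh r (Finset.mem_sdiff.1 hr).1 (Finset.mem_sdiff.1 hr).2).2
  constructor
  · rintro ⟨N, hMN, hN⟩
    exact ⟨N, (steps_iff_of_avoidsHeads hsub hPfresh hM).1 hMN,
      (final_iff_of_avoidsHeads hsub (hM.of_steps hPfresh hMN)).1 hN⟩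
  · rintro ⟨N, hMN, hN⟩
    rw [← steps_iff_of_avoidsHeads hsub hPfresh hM] at hMN
    exact ⟨N, hMN, (final_iff_of_avoidsHeads hsub (hM.of_steps hPfresh hMN)).2 hN⟩

theorem terminates_conservative_extension (P P' : Program) (hP : P.Wf) (hP' : P'.Wf)
    (hsub : P ⊆ P') (M : Tm)
    (hfresh : ∀ r ∈ P', r ∉ P → ¬ Tm.HasName r.head M ∧ ¬ P.HasName r.head) :
    Terminates P M ↔ Terminates P' M :=
  terminates_conservative_extension_general P P' hsub M hfresh
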